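/- Let ρ_{AB} = (1/2)(|0⟩⟨0|_A ⊗ ρ'_B + |1⟩⟨1|_A ⊗ ρ''_B) be a classical-quantum state with A a qubit. Then C_A^{(2)}(ρ_{AB}) = ‖ρ'_B − ρ''_B‖_1 / 4: among all two-outcome POVMs on A with outcome probabilities 1/2 on ρ_A, the optimal one is the projective measurement in the {|0⟩,|1⟩} basis, and if P_{A,1} has diagonal elements λ, η in this basis (with λ + η = 1 forced by the maximal-entropy condition), the induced output states satisfy ‖ρ_{B,1} − ρ_{B,2}‖_1 = |λ − η| · ‖ρ'_B − ρ''_B‖_1 ≤ ‖ρ'_B − ρ''_B‖_1. -/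

import Mathlib

open Matrix BigOperators ComplexOrder Kronecker

def IsDensity {n : Type*} [Fintype n] [DecidableEq n] (ρ : Matrix n n ℂ) : Prop :=
  ρ.PosSemidef ∧ ρ.trace = 1

noncomputable def traceNorm {d : ℕ} (A : Matrix (Fin d) (Fin d) ℂ) : ℝ :=
  if h : A.IsHermitian then ∑ i, |h.eigenvalues i| else 0

noncomputable def ptraceA {dA dB : ℕ}
    (M : Matrix (Fin dA × Fin dB) (Fin dA × Fin dB) ℂ) : Matrix (Fin dB) (Fin dB) ℂ :=
  Matrix.of fun i j => ∑ a, M (a, i) (a, j)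

/-- The correlation measure `C_A^{(2)}`: the supremum, over two-outcome POVMs on `A`
that are maximally entropic for `ρ` (both outcome probabilities equal `1/2`), of a
quarter of the trace distance of the two post-measurement states on `B`. -/
noncomputable def CA2 {dA dB : ℕ}
    (ρ : Matrix (Fin dA × Fin dB) (Fin dA × Fin dB) ℂ) : ℝ :=
  sSup { x : ℝ | ∃ P₁ P₂ : Matrix (Fin dA) (Fin dA) ℂ,
    P₁.PosSemidef ∧ P₂.PosSemidef ∧ P₁ + P₂ = 1 ∧
    (ρ * (P₁ ⊗ₖ (1 : Matrix (Fin dB) (Fin dB) ℂ))).trace = 1/2 ∧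
    (ρ * (P₂ ⊗ₖ (1 : Matrix (Fin dB) (Fin dB) ℂ))).trace = 1/2 ∧
    x = traceNorm ((2 : ℂ) • ptraceA (ρ * (P₁ ⊗ₖ (1 : Matrix (Fin dB) (Fin dB) ℂ)))
          - (2 : ℂ) • ptraceA (ρ * (P₂ ⊗ₖ (1 : Matrix (Fin dB) (Fin dB) ℂ)))) / 4 }

/-!
The partial trace of `ρ_AB (P ⊗ 1)` is `(P₀₀ ρ' + P₁₁ ρ'') / 2`, so maximal entropy means
`P₀₀ + P₁₁ = 1` and the two output states differ by `(P₀₀ - P₁₁) (ρ' - ρ'')`. Scaling a Hermitian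
matrix by a real `c` scales its eigenvalues by `c` (compare characteristic polynomials through the
continuous functional calculus), so the trace norm picks up the factor `|P₀₀ - P₁₁|`, which is at
most `1` since both diagonal entries of a positive semidefinite `P` are nonnegative. The projective
measurement in the basis `{|0⟩, |1⟩}` attains the bound.
-/

lemma Complex.norm_sub_le_one_of_nonneg {a b : ℂ} (ha : 0 ≤ a) (hb : 0 ≤ b) (hab : a + b = 1) :
    ‖a - b‖ ≤ 1 := by
  have hnorm : ((‖a‖ + ‖b‖ : ℝ) : ℂ) = 1 := by
    push_cast [Complex.norm_of_nonneg' ha, Complex.norm_of_nonneg' hb]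
    exact hab
  exact (norm_sub_le a b).trans (by exact_mod_cast hnorm.le)

section TraceNorm

variable {d : ℕ}

open Polynomial in
lemma traceNorm_eq_sum_roots_charpoly {A : Matrix (Fin d) (Fin d) ℂ} (hA : A.IsHermitian) :
    traceNorm A = (A.charpoly.roots.map fun z => |z.re|).sum := by
  rw [traceNorm, dif_pos hA, hA.roots_charpoly_eq_eigenvalues, Multiset.map_map]
  simp [Finset.sum_eq_multiset_sum, Function.comp_def]

open Polynomial in
lemma traceNorm_cfc {A : Matrix (Fin d) (Fin d) ℂ} (hA : A.IsHermitian) (f : ℝ → ℝ) :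
    traceNorm (cfc f A) = ∑ i, |f (hA.eigenvalues i)| := by
  rw [traceNorm_eq_sum_roots_charpoly (cfc_predicate f A).isHermitian, hA.charpoly_cfc_eq,
    roots_prod _ _ (Finset.prod_ne_zero_iff.mpr fun i _ => X_sub_C_ne_zero _)]
  simp [Finset.sum_eq_multiset_sum, Function.comp_def]

lemma traceNorm_nonneg (A : Matrix (Fin d) (Fin d) ℂ) : 0 ≤ traceNorm A := by
  unfold traceNorm
  split
  · exact Finset.sum_nonneg fun i _ => abs_nonneg _
  · exact le_rfl

lemma traceNorm_ofReal_smul (c : ℝ) {A : Matrix (Fin d) (Fin d) ℂ}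
    (hA : A.IsHermitian) : traceNorm ((c : ℂ) • A) = |c| * traceNorm A := by
  rw [Complex.coe_smul, ← cfc_const_mul_id c A hA.isSelfAdjoint, traceNorm_cfc hA, traceNorm,
    dif_pos hA, Finset.mul_sum]
  simp only [abs_mul]

lemma traceNorm_smul_of_isSelfAdjoint {z : ℂ} (hz : IsSelfAdjoint z)
    {A : Matrix (Fin d) (Fin d) ℂ} (hA : A.IsHermitian) :
    traceNorm (z • A) = ‖z‖ * traceNorm A := by
  rw [← Complex.conj_eq_iff_re.mp hz, traceNorm_ofReal_smul _ hA, Complex.norm_real,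
    Real.norm_eq_abs]

end TraceNorm

section PartialTrace

variable {dA dB : ℕ}

@[simp]
lemma ptraceA_add (M N : Matrix (Fin dA × Fin dB) (Fin dA × Fin dB) ℂ) :
    ptraceA (M + N) = ptraceA M + ptraceA N := by
  ext i j
  simp [ptraceA, Finset.sum_add_distrib]

@[simp]
lemma ptraceA_smul (c : ℂ) (M : Matrix (Fin dA × Fin dB) (Fin dA × Fin dB) ℂ) :
    ptraceA (c • M) = c • ptraceA M := by
  ext i j
  simp [ptraceA, Finset.mul_sum]

@[simp]
lemma ptraceA_kronecker (X : Matrix (Fin dA) (Fin dA) ℂ) (Y : Matrix (Fin dB) (Fin dB) ℂ) :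
    ptraceA (X ⊗ₖ Y) = X.trace • Y := by
  ext i j
  simp [ptraceA, Matrix.trace, Finset.sum_mul]

lemma trace_ptraceA (M : Matrix (Fin dA × Fin dB) (Fin dA × Fin dB) ℂ) :
    (ptraceA M).trace = M.trace := by
  simp only [Matrix.trace, Matrix.diag, ptraceA, Matrix.of_apply, Fintype.sum_prod_type]
  exact Finset.sum_comm

end PartialTrace

section ClassicalQuantum

variable {dB : ℕ}

noncomputable def cqState (σ τ : Matrix (Fin dB) (Fin dB) ℂ) :
    Matrix (Fin 2 × Fin dB) (Fin 2 × Fin dB) ℂ :=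
  (1/2 : ℂ) • (Matrix.single (0 : Fin 2) 0 (1 : ℂ) ⊗ₖ σ + Matrix.single (1 : Fin 2) 1 (1 : ℂ) ⊗ₖ τ)

variable {σ τ : Matrix (Fin dB) (Fin dB) ℂ}

lemma ptraceA_cqState_mul (P : Matrix (Fin 2) (Fin 2) ℂ) :
    ptraceA (cqState σ τ * (P ⊗ₖ (1 : Matrix (Fin dB) (Fin dB) ℂ)))
      = (1/2 : ℂ) • (P 0 0 • σ + P 1 1 • τ) := by
  simp [cqState, Matrix.add_mul, ← Matrix.mul_kronecker_mul, Matrix.trace_single_mul]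

lemma trace_cqState_mul (hσ : σ.trace = 1) (hτ : τ.trace = 1)
    (P : Matrix (Fin 2) (Fin 2) ℂ) :
    (cqState σ τ * (P ⊗ₖ (1 : Matrix (Fin dB) (Fin dB) ℂ))).trace = (P 0 0 + P 1 1) / 2 := by
  rw [← trace_ptraceA, ptraceA_cqState_mul]
  simp only [trace_smul, trace_add, hσ, hτ, smul_eq_mul, mul_one]
  ring

lemma cqState_output_sub {P₁ P₂ : Matrix (Fin 2) (Fin 2) ℂ}
    (hsum : P₁ + P₂ = 1) (hdiag : P₁ 0 0 + P₁ 1 1 = 1) :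
    (2 : ℂ) • ptraceA (cqState σ τ * (P₁ ⊗ₖ (1 : Matrix (Fin dB) (Fin dB) ℂ)))
        - (2 : ℂ) • ptraceA (cqState σ τ * (P₂ ⊗ₖ (1 : Matrix (Fin dB) (Fin dB) ℂ)))
      = (P₁ 0 0 - P₁ 1 1) • (σ - τ) := by
  obtain rfl : P₂ = 1 - P₁ := eq_sub_of_add_eq' hsum
  rw [ptraceA_cqState_mul, ptraceA_cqState_mul]
  ext i j
  simp only [smul_add, Matrix.sub_apply, one_apply_eq,
    Matrix.add_apply, Matrix.smul_apply, smul_eq_mul]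
  linear_combination (σ i j + τ i j) * hdiag

lemma diag_add_eq_one_of_trace_cqState_mul (hσ : σ.trace = 1) (hτ : τ.trace = 1)
    {P : Matrix (Fin 2) (Fin 2) ℂ}
    (hP : (cqState σ τ * (P ⊗ₖ (1 : Matrix (Fin dB) (Fin dB) ℂ))).trace = 1/2) :
    P 0 0 + P 1 1 = 1 := by
  rw [trace_cqState_mul hσ hτ] at hP
  linear_combination 2 * hP

lemma traceNorm_cqState_output_sub (hσ : σ.IsHermitian) (hτ : τ.IsHermitian)
    {P₁ P₂ : Matrix (Fin 2) (Fin 2) ℂ} (hP₁ : P₁.IsHermitian) (hsum : P₁ + P₂ = 1)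
    (hdiag : P₁ 0 0 + P₁ 1 1 = 1) :
    traceNorm ((2 : ℂ) • ptraceA (cqState σ τ * (P₁ ⊗ₖ (1 : Matrix (Fin dB) (Fin dB) ℂ)))
        - (2 : ℂ) • ptraceA (cqState σ τ * (P₂ ⊗ₖ (1 : Matrix (Fin dB) (Fin dB) ℂ))))
      = ‖P₁ 0 0 - P₁ 1 1‖ * traceNorm (σ - τ) := by
  have hz : IsSelfAdjoint (P₁ 0 0 - P₁ 1 1) := .sub (hP₁.apply 0 0) (hP₁.apply 1 1)
  rw [cqState_output_sub hsum hdiag, traceNorm_smul_of_isSelfAdjoint hz (hσ.sub hτ)]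

lemma traceNorm_cqState_output_sub_le (hσ : σ.IsHermitian) (hτ : τ.IsHermitian)
    {P₁ P₂ : Matrix (Fin 2) (Fin 2) ℂ} (hP₁ : P₁.PosSemidef) (hsum : P₁ + P₂ = 1)
    (hdiag : P₁ 0 0 + P₁ 1 1 = 1) :
    traceNorm ((2 : ℂ) • ptraceA (cqState σ τ * (P₁ ⊗ₖ (1 : Matrix (Fin dB) (Fin dB) ℂ)))
        - (2 : ℂ) • ptraceA (cqState σ τ * (P₂ ⊗ₖ (1 : Matrix (Fin dB) (Fin dB) ℂ))))
      ≤ traceNorm (σ - τ) := by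
  rw [traceNorm_cqState_output_sub hσ hτ hP₁.isHermitian hsum hdiag]
  exact mul_le_of_le_one_left (traceNorm_nonneg _)
    (Complex.norm_sub_le_one_of_nonneg (hP₁.diag_nonneg) (hP₁.diag_nonneg) hdiag)

lemma CA2_cqState (hσ : IsDensity σ) (hτ : IsDensity τ) :
    CA2 (cqState σ τ) = traceNorm (σ - τ) / 4 := by
  refine IsGreatest.csSup_eq ⟨?_, ?_⟩
  · have hsum : diagonal ![1, 0] + diagonal ![0, 1] = (1 : Matrix (Fin 2) (Fin 2) ℂ) := by
      ext i j; fin_cases i <;> fin_cases j <;> simp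
    refine ⟨_, _, .diagonal ?_, .diagonal ?_, hsum, ?_, ?_, ?_⟩
    · intro i; fin_cases i <;> simp
    · intro i; fin_cases i <;> simp
    · simp [trace_cqState_mul hσ.2 hτ.2]
    · simp [trace_cqState_mul hσ.2 hτ.2]
    · simp [cqState_output_sub hsum (by simp)]
  · rintro x ⟨P₁, P₂, hP₁, -, hsum, ht₁, -, rfl⟩
    have hdiag := diag_add_eq_one_of_trace_cqState_mul hσ.2 hτ.2 ht₁
    have := traceNorm_cqState_output_sub_le hσ.1.isHermitian hτ.1.isHermitian hP₁ hsum hdiag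
    linarith

end ClassicalQuantum

/-- For the classical-quantum state
`ρ_{AB} = (1/2)(|0⟩⟨0|_A ⊗ ρ'_B + |1⟩⟨1|_A ⊗ ρ''_B)` with a qubit ancilla `A`:
every maximally entropic two-outcome POVM on `A` with diagonal elements
`λ = P₁ 0 0`, `η = P₁ 1 1` satisfies `λ + η = 1` and gives output states with
`‖ρ_{B,1} - ρ_{B,2}‖₁ = |λ - η| ⬝ ‖ρ'_B - ρ''_B‖₁ ≤ ‖ρ'_B - ρ''_B‖₁`; consequently
`C_A^{(2)}(ρ_{AB}) = ‖ρ'_B - ρ''_B‖₁ / 4`, the optimum being the projective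
measurement in the `{|0⟩, |1⟩}` basis. -/
theorem CA2_classical_quantum (dB : ℕ)
    (ρ' ρ'' : Matrix (Fin dB) (Fin dB) ℂ)
    (h' : IsDensity ρ') (h'' : IsDensity ρ'') :
    let ρAB : Matrix (Fin 2 × Fin dB) (Fin 2 × Fin dB) ℂ :=
      (1/2 : ℂ) • (Matrix.single (0 : Fin 2) 0 (1 : ℂ) ⊗ₖ ρ'
        + Matrix.single (1 : Fin 2) 1 (1 : ℂ) ⊗ₖ ρ'')
    (∀ P₁ P₂ : Matrix (Fin 2) (Fin 2) ℂ,
      P₁.PosSemidef → P₂.PosSemidef → P₁ + P₂ = 1 →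
      (ρAB * (P₁ ⊗ₖ (1 : Matrix (Fin dB) (Fin dB) ℂ))).trace = 1/2 →
      (ρAB * (P₂ ⊗ₖ (1 : Matrix (Fin dB) (Fin dB) ℂ))).trace = 1/2 →
      P₁ 0 0 + P₁ 1 1 = 1 ∧
      traceNorm ((2 : ℂ) • ptraceA (ρAB * (P₁ ⊗ₖ (1 : Matrix (Fin dB) (Fin dB) ℂ)))
          - (2 : ℂ) • ptraceA (ρAB * (P₂ ⊗ₖ (1 : Matrix (Fin dB) (Fin dB) ℂ))))
        = ‖P₁ 0 0 - P₁ 1 1‖ * traceNorm (ρ' - ρ'') ∧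
      traceNorm ((2 : ℂ) • ptraceA (ρAB * (P₁ ⊗ₖ (1 : Matrix (Fin dB) (Fin dB) ℂ)))
          - (2 : ℂ) • ptraceA (ρAB * (P₂ ⊗ₖ (1 : Matrix (Fin dB) (Fin dB) ℂ))))
        ≤ traceNorm (ρ' - ρ'')) ∧
    CA2 ρAB = traceNorm (ρ' - ρ'') / 4 := by
  refine ⟨fun P₁ P₂ hP₁ _ hsum ht₁ _ => ?_, CA2_cqState h' h''⟩
  have hdiag := diag_add_eq_one_of_trace_cqState_mul h'.2 h''.2 ht₁
  exact ⟨hdiag,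
    traceNorm_cqState_output_sub h'.1.isHermitian h''.1.isHermitian hP₁.isHermitian hsum hdiag,
    traceNorm_cqState_output_sub_le h'.1.isHermitian h''.1.isHermitian hP₁ hsum hdiag⟩
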